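/- arXiv:2207.11326 — 3 statements merged into one kernel-verified Lean document; each statement's English description precedes it below -/
import Mathlib

section
/- For any nonzero integer k, the formal power series kx(e^x − 1)/(e^{kx} − 1) is a Hurwitz series (its exponential generating function coefficients are all integers). -/
/-!
Hurwitz series form a subring of `ℚ⟦X⟧`, and a Hurwitz series `g` without constant term has
Hurwitz divided powers `g ^ j / j!`: a series is Hurwitz iff its constant term is an integer and
its derivative is Hurwitz, and `(g ^ (j + 1) / (j + 1)!)' = g ^ j / j! * g'`.

Put `v = e^x - 1` and `u = e^{kx} - 1 = v R`, where `R` is Hurwitz (a telescoping sum of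
`±e^{ix}`). Since `kx = log (1 + u)`,
`f = kx v / u = ∑_{j ≥ 0} (-1)^j j! (v ^ (j + 1) / (j + 1)!) R ^ j`,
a sum of Hurwitz series. Truncating `log (1 + u)` after `n + 1` terms costs only `X ^ (n + 2)`,
so `f` agrees modulo `X ^ (n + 1)` with a finite partial sum, which is Hurwitz.
-/

/-- A Hurwitz series: all exponential generating function coefficients are integers. -/
def IsHurwitz (f : PowerSeries ℚ) : Prop :=
  ∀ n : ℕ, ∃ m : ℤ, (Nat.factorial n : ℚ) * PowerSeries.coeff n f = m

open PowerSeries Finset Nat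

theorem IsHurwitz.mul {f g : ℚ⟦X⟧} (hf : IsHurwitz f) (hg : IsHurwitz g) :
    IsHurwitz (f * g) := by
  choose a ha using hf
  choose b hb using hg
  intro n
  refine ⟨∑ p ∈ antidiagonal n, n.choose p.2 * a p.1 * b p.2, ?_⟩
  rw [coeff_mul, mul_sum]
  push_cast
  refine sum_congr rfl fun p hp => ?_
  obtain rfl := mem_antidiagonal.mp hp
  rw [← ha, ← hb, ← add_choose_mul_factorial_mul_factorial p.1 p.2, Nat.cast_mul,
    Nat.cast_mul]
  ring

def hurwitzSubring : Subring ℚ⟦X⟧ where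
  carrier := {f | IsHurwitz f}
  mul_mem' := IsHurwitz.mul
  one_mem' n := ⟨if n = 0 then 1 else 0, by rcases n with _ | n <;> simp [coeff_one]⟩
  add_mem' {f g} hf hg n := by
    obtain ⟨a, ha⟩ := hf n
    obtain ⟨b, hb⟩ := hg n
    exact ⟨a + b, by rw [map_add, mul_add, ha, hb, Int.cast_add]⟩
  zero_mem' _ := ⟨0, by simp⟩
  neg_mem' {f} hf n := by
    obtain ⟨a, ha⟩ := hf n
    exact ⟨-a, by rw [map_neg, mul_neg, ha, Int.cast_neg]⟩

theorem mem_hurwitzSubring {f : ℚ⟦X⟧} : f ∈ hurwitzSubring ↔ IsHurwitz f := Iff.rfl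

theorem isHurwitz_exp : IsHurwitz (exp ℚ) :=
  fun n => ⟨1, by simp [coeff_exp]; field_simp⟩

theorem IsHurwitz.rescale_intCast {f : ℚ⟦X⟧} (hf : IsHurwitz f) (m : ℤ) :
    IsHurwitz (rescale (m : ℚ) f) := by
  intro n
  obtain ⟨a, ha⟩ := hf n
  exact ⟨m ^ n * a, by rw [coeff_rescale, mul_left_comm, ha]; push_cast; ring⟩

theorem isHurwitz_iff_derivative {f : ℚ⟦X⟧} :
    IsHurwitz f ↔ (∃ m : ℤ, constantCoeff f = m) ∧ IsHurwitz (d⁄dX ℚ f) := by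
  have hcoeff (n : ℕ) :
      (n ! : ℚ) * coeff n (d⁄dX ℚ f) = ((n + 1)! : ℚ) * coeff (n + 1) f := by
    rw [coeff_derivative, factorial_succ]
    push_cast
    ring
  simp only [IsHurwitz, hcoeff]
  constructor
  · intro h
    exact ⟨by simpa using h 0, fun n => h (n + 1)⟩
  · rintro ⟨h0, h⟩ (_ | n)
    · simpa using h0
    · exact h n

theorem IsHurwitz.inv_factorial_smul_pow {g : ℚ⟦X⟧} (hg : IsHurwitz g)
    (hg0 : constantCoeff g = 0) :
    ∀ j : ℕ, IsHurwitz ((j ! : ℚ)⁻¹ • g ^ j)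
  | 0 => by simpa using mem_hurwitzSubring.mp hurwitzSubring.one_mem
  | j + 1 => by
    refine isHurwitz_iff_derivative.mpr ⟨⟨0, by simp [hg0]⟩, ?_⟩
    have hderiv : d⁄dX ℚ (((j + 1)! : ℚ)⁻¹ • g ^ (j + 1))
        = ((j ! : ℚ)⁻¹ • g ^ j) * d⁄dX ℚ g := by
      rw [Derivation.map_smul, derivative_pow, add_tsub_cancel_right, mul_assoc, ← nsmul_eq_mul,
        ← Nat.cast_smul_eq_nsmul ℚ, smul_smul, smul_mul_assoc]
      congr 1
      push_cast [factorial_succ]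
      field_simp
    rw [hderiv]
    exact (hg.inv_factorial_smul_pow hg0 j).mul (isHurwitz_iff_derivative.mp hg).2

theorem exists_isHurwitz_exp_sub_one_mul_eq (k : ℤ) :
    ∃ R, IsHurwitz R ∧ (exp ℚ - 1) * R = rescale (k : ℚ) (exp ℚ) - 1 := by
  have hstep (a : ℚ) :
      rescale (a + 1) (exp ℚ) - rescale a (exp ℚ) = (exp ℚ - 1) * rescale a (exp ℚ) := by
    rw [← exp_mul_exp_eq_exp_add, rescale_one, RingHom.id_apply]
    ring
  induction k using Int.induction_on with
  | zero => exact ⟨0, hurwitzSubring.zero_mem, by simp⟩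
  | succ i ih =>
    obtain ⟨R, hR, hRi⟩ := ih
    refine ⟨R + rescale (i : ℚ) (exp ℚ),
      hurwitzSubring.add_mem hR (isHurwitz_exp.rescale_intCast i), ?_⟩
    rw [mul_add, hRi, ← hstep]
    push_cast
    ring
  | pred i ih =>
    obtain ⟨R, hR, hRi⟩ := ih
    refine ⟨R - rescale ((-i - 1 : ℤ) : ℚ) (exp ℚ),
      hurwitzSubring.sub_mem hR (isHurwitz_exp.rescale_intCast _), ?_⟩
    have h := hstep (-i - 1)
    rw [sub_add_cancel] at h
    push_cast at hRi ⊢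
    rw [mul_sub, hRi, ← h]
    ring

theorem X_pow_succ_dvd_of_X_pow_dvd_derivative {R : Type*} [CommRing R] [IsAddTorsionFree R]
    {f : R⟦X⟧} {N : ℕ} (h0 : constantCoeff f = 0) (hd : X ^ N ∣ d⁄dX R f) :
    X ^ (N + 1) ∣ f := by
  rw [X_pow_dvd_iff] at hd ⊢
  rintro (_ | i) hi
  · simpa using h0
  · have h := hd i (by omega)
    rw [coeff_derivative, mul_comm, ← Nat.cast_add_one, ← nsmul_eq_mul] at h
    exact (nsmul_eq_zero_iff.mp h).resolve_right (Nat.succ_ne_zero i)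

theorem X_pow_dvd_of_X_pow_succ_dvd_mul {K : Type*} [Field K] {a u : K⟦X⟧} {N : ℕ}
    (hu0 : constantCoeff u = 0) (hu1 : coeff 1 u ≠ 0) (h : X ^ (N + 1) ∣ a * u) :
    X ^ N ∣ a := by
  obtain ⟨w, rfl⟩ := X_dvd_iff.mpr hu0
  have hw : IsUnit w := by
    rw [isUnit_iff_constantCoeff, ← coeff_zero_eq_constantCoeff_apply, ← coeff_succ_X_mul]
    exact hu1.isUnit
  rw [pow_succ, mul_left_comm, mul_comm (X ^ N)] at h
  exact hw.dvd_mul_right.mp ((mul_dvd_mul_iff_left X_ne_zero).mp h)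

theorem derivative_rescale {R : Type*} [CommSemiring R] (a : R) (f : R⟦X⟧) :
    d⁄dX R (rescale a f) = a • rescale a (d⁄dX R f) := by
  ext n
  simp only [coeff_derivative, coeff_rescale, map_smul, smul_eq_mul, pow_succ]
  ring

noncomputable def logTrunc (N : ℕ) (u : ℚ⟦X⟧) : ℚ⟦X⟧ :=
  ∑ j ∈ range N, ((-1 : ℚ) ^ j / (j + 1)) • u ^ (j + 1)

theorem constantCoeff_rescale_exp_sub_one (a : ℚ) :
    constantCoeff (rescale a (exp ℚ) - 1) = 0 := by
  rw [map_sub, ← coeff_zero_eq_constantCoeff_apply, coeff_rescale]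
  simp

theorem derivative_logTrunc (N : ℕ) (u : ℚ⟦X⟧) :
    d⁄dX ℚ (logTrunc N u) = (∑ j ∈ range N, (-u) ^ j) * d⁄dX ℚ u := by
  rw [logTrunc, map_sum, sum_mul]
  refine sum_congr rfl fun j _ => ?_
  rw [Derivation.map_smul, derivative_pow, add_tsub_cancel_right, smul_eq_C_mul, neg_pow u]
  have hc : C ((-1 : ℚ) ^ j / (j + 1)) * ((j + 1 : ℕ) : ℚ⟦X⟧) = (-1) ^ j := by
    rw [← map_natCast C, ← map_mul, Nat.cast_add_one, div_mul_cancel₀ _ (by positivity)]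
    simp
  linear_combination (u ^ j * d⁄dX ℚ u) * hc

theorem X_pow_succ_dvd_smul_X_sub_logTrunc (k : ℚ) (N : ℕ) :
    X ^ (N + 1) ∣ k • X - logTrunc N (rescale k (exp ℚ) - 1) := by
  set u := rescale k (exp ℚ) - 1
  have hu0 : constantCoeff u = 0 := constantCoeff_rescale_exp_sub_one k
  refine X_pow_succ_dvd_of_X_pow_dvd_derivative (by simp [logTrunc, hu0]) ?_
  have hderiv : d⁄dX ℚ (k • X - logTrunc N u) = C k * (-u) ^ N := by
    have hu : d⁄dX ℚ u = C k * (1 + u) := by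
      simp [u, derivative_rescale, derivative_exp, smul_eq_C_mul]
    have hgeom := geom_sum_mul (-u) N
    rw [map_sub, derivative_logTrunc, hu, Derivation.map_smul, derivative_X, smul_eq_C_mul]
    linear_combination C k * hgeom
  rw [hderiv]
  exact (pow_dvd_pow_of_dvd (X_dvd_iff.mpr (by simp [hu0])) N).mul_left _

theorem isHurwitz_sum_smul_pow_mul_pow {v R : ℚ⟦X⟧} (hv : IsHurwitz v)
    (hv0 : constantCoeff v = 0) (hR : IsHurwitz R) (N : ℕ) :
    IsHurwitz (∑ j ∈ range N, ((-1 : ℚ) ^ j / (j + 1)) • (v ^ (j + 1) * R ^ j)) := by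
  refine hurwitzSubring.sum_mem fun j _ => ?_
  have hterm : ((-1 : ℚ) ^ j / (j + 1)) • (v ^ (j + 1) * R ^ j)
      = ((-1) ^ j * j ! : ℤ) • (((j + 1)! : ℚ)⁻¹ • v ^ (j + 1) * R ^ j) := by
    rw [← Int.cast_smul_eq_zsmul ℚ, smul_mul_assoc, smul_smul]
    congr 1
    push_cast [factorial_succ]
    field_simp
  rw [hterm]
  exact hurwitzSubring.zsmul_mem
    ((hv.inv_factorial_smul_pow hv0 (j + 1)).mul (hurwitzSubring.pow_mem hR j)) _

theorem logTrunc_mul (N : ℕ) (v R : ℚ⟦X⟧) :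
    logTrunc N (v * R) =
      (∑ j ∈ range N, ((-1 : ℚ) ^ j / (j + 1)) • (v ^ (j + 1) * R ^ j)) * R := by
  rw [logTrunc, sum_mul]
  refine sum_congr rfl fun j _ => ?_
  rw [smul_mul_assoc, mul_pow, pow_succ R, mul_assoc]

/-- For nonzero integer `k`, the series `kx (e^x - 1)/(e^{kx} - 1)` is a Hurwitz series. -/
theorem hurwitz_kx (k : ℤ) (hk : k ≠ 0) (f : PowerSeries ℚ)
    (hf : f * (PowerSeries.rescale (k : ℚ) (PowerSeries.exp ℚ) - 1) =
      ((k : ℚ) • (PowerSeries.X : PowerSeries ℚ)) * (PowerSeries.exp ℚ - 1)) :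
    IsHurwitz f := by
  obtain ⟨R, hR, hvR⟩ := exists_isHurwitz_exp_sub_one_mul_eq k
  set u := rescale (k : ℚ) (exp ℚ) - 1
  intro n
  set G := ∑ j ∈ range (n + 1), ((-1 : ℚ) ^ j / (j + 1)) • ((exp ℚ - 1) ^ (j + 1) * R ^ j)
    with hG_def
  have hG : IsHurwitz G :=
    isHurwitz_sum_smul_pow_mul_pow (hurwitzSubring.sub_mem isHurwitz_exp hurwitzSubring.one_mem)
      (by simp) hR (n + 1)
  have hdvd : X ^ (n + 2) ∣ (f - G) * u := by
    have hfG : (f - G) * u = (exp ℚ - 1) * ((k : ℚ) • X - logTrunc (n + 1) u) := by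
      rw [sub_mul, hf, ← hvR, logTrunc_mul, ← hG_def]
      ring
    rw [hfG]
    exact (X_pow_succ_dvd_smul_X_sub_logTrunc k (n + 1)).mul_left _
  have hu1 : coeff 1 u ≠ 0 := by simpa [u, coeff_rescale] using hk
  have hfG_dvd : X ^ (n + 1) ∣ f - G :=
    X_pow_dvd_of_X_pow_succ_dvd_mul (constantCoeff_rescale_exp_sub_one _) hu1 hdvd
  have hcoeff : coeff n f = coeff n G := by
    rw [← sub_eq_zero, ← map_sub]
    exact X_pow_dvd_iff.mp hfG_dvd n (by omega)
  obtain ⟨m, hm⟩ := hG n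
  exact ⟨m, by rw [hcoeff, hm]⟩
end

section
/- If f(x) = ∑_{n≥1} a_n x^n/n! is a Hurwitz series with zero constant term, then for every positive integer k, f(x)^k / k! is also a Hurwitz series. -/
/-! Hurwitz series are closed under products (the binomial coefficients are integers) and
under `d/dX`, and a series is Hurwitz as soon as its constant term is an integer and its
derivative is Hurwitz. Since `d/dX (f^(k+1)/(k+1)!) = (f^k/k!) * d/dX f` and `f^(k+1)` has
constant term `0`, induction on `k` proves the theorem. -/

open PowerSeries

theorem PowerSeries.derivative_inv_factorial_smul_pow_succ {R : Type*} [Field R] [CharZero R]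
    (f : R⟦X⟧) (k : ℕ) :
    d⁄dX R (((k + 1).factorial : R)⁻¹ • f ^ (k + 1)) = ((k.factorial : R)⁻¹ • f ^ k) * d⁄dX R f := by
  rw [Derivation.map_smul, Derivation.leibniz_pow, Nat.add_sub_cancel, smul_eq_mul, smul_mul_assoc,
    ← Nat.cast_smul_eq_nsmul R, Nat.factorial_succ, Nat.cast_mul, mul_inv, mul_comm, mul_smul,
    inv_smul_smul₀ (Nat.cast_ne_zero.2 k.succ_ne_zero)]

namespace IsHurwitz

theorem one : IsHurwitz 1 := by
  rintro (_ | n)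
  · exact ⟨1, by simp⟩
  · exact ⟨0, by simp [coeff_one]⟩

theorem mul_s5 {f g : PowerSeries ℚ} (hf : IsHurwitz f) (hg : IsHurwitz g) :
    IsHurwitz (f * g) := by
  intro n
  choose a ha using hf
  choose b hb using hg
  refine ⟨∑ p ∈ Finset.HasAntidiagonal.antidiagonal n, (n.choose p.1 : ℤ) * a p.1 * b p.2, ?_⟩
  rw [coeff_mul, Finset.mul_sum]
  push_cast
  refine Finset.sum_congr rfl fun p hp => ?_
  have hchoose : (n.choose p.1 : ℚ) * p.1.factorial * p.2.factorial = n.factorial := by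
    rw [Finset.HasAntidiagonal.mem_antidiagonal] at hp
    subst hp
    rw [Nat.choose_symm_add]
    exact_mod_cast Nat.add_choose_mul_factorial_mul_factorial p.1 p.2
  rw [← hchoose, ← ha, ← hb]
  ring

theorem derivative {f : PowerSeries ℚ} (hf : IsHurwitz f) : IsHurwitz (d⁄dX ℚ f) := by
  intro n
  obtain ⟨m, hm⟩ := hf (n + 1)
  refine ⟨m, ?_⟩
  rw [coeff_derivative, ← hm, Nat.factorial_succ]
  push_cast
  ring

theorem of_derivative {f : PowerSeries ℚ} (h0 : ∃ m : ℤ, constantCoeff f = m)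
    (hd : IsHurwitz (d⁄dX ℚ f)) : IsHurwitz f := by
  rintro (_ | n)
  · simpa [coeff_zero_eq_constantCoeff] using h0
  · obtain ⟨m, hm⟩ := hd n
    refine ⟨m, ?_⟩
    rw [coeff_derivative] at hm
    rw [← hm, Nat.factorial_succ]
    push_cast
    ring

end IsHurwitz

theorem isHurwitz_pow_div_factorial_general (f : PowerSeries ℚ) (hf : IsHurwitz f)
    (h0 : PowerSeries.constantCoeff f = 0) (k : ℕ) :
    IsHurwitz ((Nat.factorial k : ℚ)⁻¹ • f ^ k) := by
  induction k with
  | zero => simpa using IsHurwitz.one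
  | succ k ih =>
    refine IsHurwitz.of_derivative ⟨0, by simp [h0]⟩ ?_
    rw [derivative_inv_factorial_smul_pow_succ]
    exact ih.mul_s5 hf.derivative

/-- If `f` is Hurwitz with zero constant term, then `f^k/k!` is Hurwitz. -/
theorem isHurwitz_pow_div_factorial (f : PowerSeries ℚ) (hf : IsHurwitz f)
    (h0 : PowerSeries.constantCoeff f = 0) (k : ℕ) (hk : 0 < k) :
    IsHurwitz ((Nat.factorial k : ℚ)⁻¹ • f ^ k) :=
  isHurwitz_pow_div_factorial_general f hf h0 k
end

section
/- If f(x) = ∑ a_n x^n/n! is a Hurwitz series with constant term a_0 = 1, then 1/f(x) is also a Hurwitz series. -/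
open PowerSeries Finset Nat

theorem PowerSeries.factorial_mul_coeff_mul {R : Type*} [CommSemiring R] (n : ℕ) (f g : R⟦X⟧) :
    (n ! : R) * coeff n (f * g) = ∑ k ∈ range (n + 1),
      (n.choose k : R) * ((k ! : R) * coeff k f) * (((n - k) ! : R) * coeff (n - k) g) := by
  rw [coeff_mul, Finset.Nat.sum_antidiagonal_eq_sum_range_succ (fun i j => coeff i f * coeff j g),
    mul_sum]
  refine sum_congr rfl fun k hk => ?_
  rw [← Nat.choose_mul_factorial_mul_factorial (Nat.lt_succ_iff.mp (mem_range.mp hk))]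
  push_cast
  ring

theorem PowerSeries.factorial_mul_coeff_inv {K : Type*} [Field K] {f : K⟦X⟧}
    (hf : constantCoeff f = 1) {n : ℕ} (hn : n ≠ 0) :
    (n ! : K) * coeff n f⁻¹ = -∑ k ∈ range n,
      (n.choose k : K) * ((k ! : K) * coeff k f⁻¹) * (((n - k) ! : K) * coeff (n - k) f) := by
  have h := factorial_mul_coeff_mul n f⁻¹ f
  rw [PowerSeries.inv_mul_cancel f (by simp [hf]), coeff_one, if_neg hn, mul_zero, sum_range_succ,
    Nat.choose_self, Nat.sub_self, Nat.factorial_zero, coeff_zero_eq_constantCoeff_apply, hf] at h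
  simp only [Nat.cast_one, one_mul, mul_one] at h
  linear_combination -h

theorem isHurwitz_iff_mem_bot (f : ℚ⟦X⟧) :
    IsHurwitz f ↔ ∀ n, (n ! : ℚ) * coeff n f ∈ (⊥ : Subring ℚ) := by
  simp only [IsHurwitz, Subring.mem_bot, eq_comm]

/-- If `f` is Hurwitz with constant term `1`, then `1/f` is Hurwitz. -/
theorem isHurwitz_inv (f : PowerSeries ℚ) (hf : IsHurwitz f)
    (h1 : PowerSeries.constantCoeff f = 1) :
    IsHurwitz f⁻¹ := by
  rw [isHurwitz_iff_mem_bot] at hf ⊢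
  intro n
  induction n using Nat.strong_induction_on with
  | _ n ih =>
    rcases eq_or_ne n 0 with rfl | hn
    · simp [constantCoeff_inv, h1]
    · rw [factorial_mul_coeff_inv h1 hn]
      exact neg_mem <| sum_mem fun k hk =>
        mul_mem (mul_mem (natCast_mem _ _) (ih k (mem_range.mp hk))) (hf (n - k))
end
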